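/- arXiv:2307.02220 — 2 statements merged into one kernel-verified Lean document; each statement's English description precedes it below -/
import Mathlib

section
/- If f is a p-zonal function on the unit sphere S² belonging to the Sobolev space H^s(S²) and g belongs to H^k(S²), then the spherical convolution f∗g belongs to H^{s+k+1/2}(S²) and satisfies ‖f∗g‖_{H^{s+k+1/2}} ≤ √(2π) ‖f‖_{H^s} ‖g‖_{H^k}. -/
open Real
open scoped ENNReal

/-- Squared Sobolev `H^s(S²)` norm of a Fourier coefficient family `a : ℕ → ℤ → ℝ`
(computed in `ℝ≥0∞`): `Σ_{n,k} (n+1/2)^{2s} |a n k|²`. -/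
noncomputable def sphSobNormSq (s : ℝ) (a : ℕ → ℤ → ℝ) : ℝ≥0∞ :=
  ∑' n : ℕ, ∑' k : ℤ, ENNReal.ofReal (((n : ℝ) + 1/2) ^ (2 * s) * (a n k) ^ 2)

/-- Squared Sobolev `H^s(S²)` norm of a `p`-zonal function with Legendre coefficients
`fhat : ℕ → ℝ`: by the addition theorem its Fourier coefficients are `fhat n * Y_{n,k}(p)`,
so the squared norm is `Σ_n (n+1/2)^{2s} (fhat n)² (2n+1)/(4π)`. -/
noncomputable def zonalSobNormSq (s : ℝ) (fhat : ℕ → ℝ) : ℝ≥0∞ :=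
  ∑' n : ℕ, ENNReal.ofReal
    (((n : ℝ) + 1/2) ^ (2 * s) * (fhat n) ^ 2 * (2 * (n : ℝ) + 1) / (4 * π))

/-- If `f` is `p`-zonal with Legendre coefficients `fhat` and `f ∈ H^s(S²)`,
and `g ∈ H^k(S²)` has Fourier coefficients `ghat`, then the spherical convolution `f∗g`,
whose Fourier coefficients are `(f∗g)^∧_{n,j} = fhat n * ghat n j`, lies in
`H^{s+k+1/2}(S²)` with `‖f∗g‖_{H^{s+k+1/2}} ≤ √(2π) ‖f‖_{H^s} ‖g‖_{H^k}` (stated for the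
squared norms in `ℝ≥0∞`, which also yields membership). -/
theorem zonal_convolution_sobolev_bound (s k : ℝ) (fhat : ℕ → ℝ) (ghat : ℕ → ℤ → ℝ)
    (hf : zonalSobNormSq s fhat < ∞) (hg : sphSobNormSq k ghat < ∞) :
    sphSobNormSq (s + k + 1/2) (fun n j => fhat n * ghat n j) ≤
      ENNReal.ofReal (2 * π) * zonalSobNormSq s fhat * sphSobNormSq k ghat ∧
    sphSobNormSq (s + k + 1/2) (fun n j => fhat n * ghat n j) < ∞ := by
  have hπ : (0:ℝ) < π := Real.pi_pos
  set F := zonalSobNormSq s fhat with hF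
  set G := sphSobNormSq k ghat with hG
  have hle : sphSobNormSq (s + k + 1/2) (fun n j => fhat n * ghat n j) ≤
      ENNReal.ofReal (2 * π) * F * G := by
    have key : ∀ n : ℕ,
        (∑' j : ℤ, ENNReal.ofReal
          (((n : ℝ) + 1/2) ^ (2 * (s + k + 1/2)) * (fhat n * ghat n j) ^ 2)) ≤
        ENNReal.ofReal (2 * π) *
          ENNReal.ofReal
            (((n : ℝ) + 1/2) ^ (2 * s) * (fhat n) ^ 2 * (2 * (n : ℝ) + 1) / (4 * π)) * G := by
      intro n
      have hbase : (0:ℝ) < (n : ℝ) + 1/2 := by positivity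
      set A : ℝ := ((n : ℝ) + 1/2) ^ (2 * s) * (fhat n) ^ 2 * (2 * (n : ℝ) + 1) / (4 * π)
        with hA
      have hA0 : (0:ℝ) ≤ A := by
        have := Real.rpow_nonneg hbase.le (2 * s)
        positivity
      have heq : ∀ j : ℤ,
          ((n : ℝ) + 1/2) ^ (2 * (s + k + 1/2)) * (fhat n * ghat n j) ^ 2
            = (2 * π * A) * (((n : ℝ) + 1/2) ^ (2 * k) * (ghat n j) ^ 2) := by
        intro j
        have h1 : ((n : ℝ) + 1/2) ^ (2 * (s + k + 1/2))
            = ((n : ℝ) + 1/2) ^ (2 * s) * ((n : ℝ) + 1/2) ^ (2 * k) * ((n : ℝ) + 1/2) := by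
          rw [show 2 * (s + k + 1/2) = 2 * s + 2 * k + 1 by ring,
            Real.rpow_add hbase, Real.rpow_add hbase, Real.rpow_one]
        rw [h1, hA]
        field_simp
        ring
      calc (∑' j : ℤ, ENNReal.ofReal
              (((n : ℝ) + 1/2) ^ (2 * (s + k + 1/2)) * (fhat n * ghat n j) ^ 2))
          = ∑' j : ℤ, ENNReal.ofReal (2 * π * A) *
              ENNReal.ofReal (((n : ℝ) + 1/2) ^ (2 * k) * (ghat n j) ^ 2) := by
            refine tsum_congr fun j => ?_
            rw [heq j, ENNReal.ofReal_mul (by positivity)]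
        _ = ENNReal.ofReal (2 * π * A) *
              ∑' j : ℤ, ENNReal.ofReal (((n : ℝ) + 1/2) ^ (2 * k) * (ghat n j) ^ 2) :=
            ENNReal.tsum_mul_left
        _ ≤ ENNReal.ofReal (2 * π * A) * G := by
            gcongr
            exact ENNReal.le_tsum n
        _ = ENNReal.ofReal (2 * π) * ENNReal.ofReal A * G := by
            rw [ENNReal.ofReal_mul (by positivity)]
    calc sphSobNormSq (s + k + 1/2) (fun n j => fhat n * ghat n j)
        ≤ ∑' n : ℕ, ENNReal.ofReal (2 * π) *
            ENNReal.ofReal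
              (((n : ℝ) + 1/2) ^ (2 * s) * (fhat n) ^ 2 * (2 * (n : ℝ) + 1) / (4 * π)) * G :=
          ENNReal.tsum_le_tsum key
      _ = ENNReal.ofReal (2 * π) * F * G := by
          rw [hF, zonalSobNormSq]
          rw [ENNReal.tsum_mul_right, ENNReal.tsum_mul_left]
  refine ⟨hle, lt_of_le_of_lt hle ?_⟩
  exact ENNReal.mul_lt_top (ENNReal.mul_lt_top ENNReal.ofReal_lt_top hf) hg
end

section
/- Let τ: dom(τ) ⊂ L²(S²) → L²(S²) be a (possibly unbounded) linear operator with adjoint τ*, and for y ∈ L²(S²) and t > 0 let J_y(t) = min{‖y − h‖ : h ∈ dom(τ*), ‖τ*(h)‖ ≤ t} (attained at h_t). Suppose g, g' ∈ dom(τ) with ‖τ(g)‖ ≤ c, ‖τ(g')‖ ≤ c and ‖g − g'‖ ≤ ε'. Then for all y ∈ L²(S²): |⟨τ(g) − τ(g'), y⟩| ≤ inf_{t>0} { 2c J_y(t) + t ε' }. -/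
open scoped RealInnerProductSpace

/-- Abstract weak-convergence estimate. Let `τ` be a (possibly unbounded)
linear operator defined on a subspace `Dτ` of a real Hilbert space `L`, with adjoint `τs`
defined on `Dτs` (so `⟪τ u, h⟫ = ⟪u, τs h⟫`). For `y ∈ L` and `t > 0` let `ht t ∈ Dτs` attain
the minimum `J y t = ‖y − ht t‖` among `h ∈ Dτs` with `‖τs h‖ ≤ t`. If `g, g' ∈ Dτ` satisfy
`‖τ g‖ ≤ c`, `‖τ g'‖ ≤ c`, `‖g − g'‖ ≤ ε'`, then
`|⟪τ g − τ g', y⟫| ≤ 2 c (J y t) + t ε'` for every `t > 0` (hence also for the infimum). -/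
theorem abstract_weak_convergence_estimate
    {L : Type*} [NormedAddCommGroup L] [InnerProductSpace ℝ L] [CompleteSpace L]
    (Dτ Dτs : Submodule ℝ L) (τ : Dτ →ₗ[ℝ] L) (τs : Dτs →ₗ[ℝ] L)
    (hadj : ∀ (u : Dτ) (h : Dτs), ⟪τ u, (h : L)⟫ = ⟪(u : L), τs h⟫)
    (y : L) (J : ℝ → ℝ) (ht : ℝ → Dτs)
    (hmin : ∀ t : ℝ, 0 < t → ‖τs (ht t)‖ ≤ t ∧ J t = ‖y - (ht t : L)‖ ∧
      ∀ h : Dτs, ‖τs h‖ ≤ t → J t ≤ ‖y - (h : L)‖)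
    (c ε' : ℝ) (g g' : Dτ)
    (hgc : ‖τ g‖ ≤ c) (hg'c : ‖τ g'‖ ≤ c) (hgg' : ‖(g : L) - (g' : L)‖ ≤ ε') :
    ∀ t : ℝ, 0 < t → |⟪τ g - τ g', y⟫| ≤ 2 * c * J t + t * ε' := by
  intro t ht0
  obtain ⟨hτs, hJ, _⟩ := hmin t ht0
  have hsplit : ⟪τ g - τ g', y⟫ =
      ⟪τ g - τ g', y - (ht t : L)⟫ + ⟪(g : L) - (g' : L), τs (ht t)⟫ := by
    simp only [inner_sub_left, inner_sub_right, hadj]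
    ring
  rw [hsplit]
  have h1 : |⟪τ g - τ g', y - (ht t : L)⟫| ≤ 2 * c * J t := by
    calc |⟪τ g - τ g', y - (ht t : L)⟫| ≤ ‖τ g - τ g'‖ * ‖y - (ht t : L)‖ :=
          abs_real_inner_le_norm _ _
      _ ≤ (2 * c) * J t := by
          rw [hJ]
          apply mul_le_mul_of_nonneg_right _ (norm_nonneg _)
          calc ‖τ g - τ g'‖ ≤ ‖τ g‖ + ‖τ g'‖ := norm_sub_le _ _
            _ ≤ 2 * c := by linarith
  have h2 : |⟪(g : L) - (g' : L), τs (ht t)⟫| ≤ t * ε' := by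
    calc |⟪(g : L) - (g' : L), τs (ht t)⟫| ≤ ‖(g : L) - (g' : L)‖ * ‖τs (ht t)‖ :=
          abs_real_inner_le_norm _ _
      _ ≤ ε' * t := by
          apply mul_le_mul hgg' hτs (norm_nonneg _) (le_trans (norm_nonneg _) hgg')
      _ = t * ε' := mul_comm _ _
  calc |_ + _| ≤ _ + _ := abs_add_le _ _
    _ ≤ 2 * c * J t + t * ε' := add_le_add h1 h2
end
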